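/- Let R be a unital non-associative ring, G a monoid, π a G-derivation on R, and S = R[G;π] the Ore monoid ring. Then for every a ∈ G, the element x^a (i.e. the formal sum 1·x^a) belongs to N_r(S) ∩ N_m(S), the intersection of the right and middle nuclei of S. -/
import Mathlib


open scoped Classical

/-! Common framework: Ore monoid rings `R[G;π]` over a unital non-associative ring `R`
and a monoid `G`.  A `G`-derivation `π = {π^a_b}` is encoded as a map
`π : G → R → (G →₀ R)`, where `π a r b = π^a_b(r)`; axiom (D0) (finite support in `b`)
is built into the `Finsupp` encoding.  The Ore monoid ring `S = R[G;π]` is the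
additive group `G →₀ R` of finitely supported formal sums `Σ r_a xᵃ`
(with `Finsupp.single a r` representing `r xᵃ`), equipped with the
multiplication `GDeriv.mul` below. -/

/-- A two-sided ideal with respect to a (possibly non-associative, non-unital)
multiplication `m` on an additive group `A`. -/
structure IsIdealWith {A : Type*} [AddCommGroup A] (m : A → A → A) (J : Set A) : Prop where
  zero_mem : (0 : A) ∈ J
  add_mem : ∀ {x y : A}, x ∈ J → y ∈ J → x + y ∈ J
  neg_mem : ∀ {x : A}, x ∈ J → -x ∈ J
  mul_mem_left : ∀ (r : A) {x : A}, x ∈ J → m r x ∈ J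
  mul_mem_right : ∀ {x : A} (r : A), x ∈ J → m x r ∈ J

/-- The subset `F` of `A` is a field with respect to the multiplication `m` with
identity `one`: it is a commutative unital subring in which every nonzero element
has a multiplicative inverse. -/
def IsFieldWith {A : Type*} [AddCommGroup A] (m : A → A → A) (one : A) (F : Set A) : Prop :=
  one ∈ F ∧ (∀ x ∈ F, ∀ y ∈ F, x + y ∈ F) ∧ (∀ x ∈ F, -x ∈ F) ∧
  (∀ x ∈ F, ∀ y ∈ F, m x y ∈ F) ∧ (∀ x ∈ F, ∀ y ∈ F, m x y = m y x) ∧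
  (∀ x ∈ F, x ≠ 0 → ∃ y ∈ F, m x y = one ∧ m y x = one)

/-- A `G`-derivation on `R`: axioms (D0)–(D4).  Here `π a r b` denotes `π^a_b(r)`,
and (D0) holds by the finite support of `π a r : G →₀ R`. -/
structure GDeriv (R : Type*) [NonAssocRing R] (G : Type*) [Monoid G] where
  /-- the family of maps; `π a r b = π^a_b(r)` -/
  π : G → R → (G →₀ R)
  /-- (D1): `π^e_e = id` and `π^e_a = 0` for `a ≠ e` -/
  d1 : ∀ r : R, π 1 r = Finsupp.single 1 r
  /-- (D2): `π^a_b(1) = δ_{a,b}` -/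
  d2 : ∀ a : G, π a (1 : R) = Finsupp.single a (1 : R)
  /-- (D3): each `π^a_b` is additive -/
  d3 : ∀ (a : G) (r s : R), π a (r + s) = π a r + π a s
  /-- (D4): `π^{ab}_c = Σ_{df = c} π^a_d ∘ π^b_f` -/
  d4 : ∀ (a b : G) (r : R),
    π (a * b) r = (π b r).sum fun f s => (π a s).sum fun d t => Finsupp.single (d * f) t

namespace GDeriv

variable {R : Type*} [NonAssocRing R] {G : Type*} [Monoid G] (P : GDeriv R G)

/-- The multiplication of the Ore monoid ring `S = R[G;π]` on `G →₀ R`: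
the biadditive extension of `(r xᵃ)(s xᵇ) = Σ_c r π^a_c(s) x^{cb}`. -/
noncomputable def mul (u v : G →₀ R) : G →₀ R :=
  u.sum fun a r => v.sum fun b s => (P.π a s).sum fun c t => Finsupp.single (c * b) (r * t)

/-- The multiplicative identity `1·xᵉ` of `S`. -/
noncomputable def one (_P : GDeriv R G) : G →₀ R := Finsupp.single 1 1

/-- `R^G = {r ∈ R : π^a_b(r) = δ_{a,b} r}`. -/
def fixed : Set R := {r | ∀ a : G, P.π a r = Finsupp.single a r}

/-- `S^G = Σ_a R^G xᵃ`, the elements of `S` all of whose coefficients lie in `R^G`. -/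
def fixedS : Set (G →₀ R) := {u | ∀ c : G, u c ∈ P.fixed}

/-- (D7): every `π^a_b` is left `R^G`-linear. -/
def LeftLinear : Prop := ∀ a b : G, ∀ s ∈ P.fixed, ∀ r : R, P.π a (s * r) b = s * P.π a r b

/-- (D8): every `π^a_b` is right `R^G`-linear. -/
def RightLinear : Prop := ∀ a b : G, ∀ r : R, ∀ s ∈ P.fixed, P.π a (r * s) b = P.π a r b * s

/-- `π` is strong if (D7) or (D8) holds. -/
def Strong : Prop := P.LeftLinear ∨ P.RightLinear

/-- (D6): `π^a_a = id_R` for all `a ∈ G` (i.e. `π` is unital). -/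
def Unital : Prop := ∀ (a : G) (r : R), P.π a r a = r

/-- `π` is commutative: `π^a_b ∘ π^c_d = π^c_d ∘ π^a_b`. -/
def Commutes : Prop := ∀ (a b c d : G) (r : R), P.π a (P.π c r d) b = P.π c (P.π a r b) d

/-- `π` is well-ordered: there is a well-order on `G` whose strict part `lt`
satisfies `π^a_b = 0` whenever `a ≺ b`. -/
def WellOrdered : Prop :=
  ∃ lt : G → G → Prop, IsWellOrder G lt ∧ ∀ a b : G, lt a b → ∀ r : R, P.π a r b = 0

/-- The extension `π̃^a_b : S → S`, `π̃^a_b(Σ_c r_c x^c) = Σ_c π^a_b(r_c) x^c`. -/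
noncomputable def ext (a b : G) (u : G →₀ R) : G →₀ R := u.sum fun c r => Finsupp.single c (P.π a r b)

/-- The commutator `[u,v] = uv - vu` in `S`. -/
noncomputable def commS (u v : G →₀ R) : G →₀ R := P.mul u v - P.mul v u

/-- The associator `(u,v,w) = (uv)w - u(vw)` in `S`. -/
noncomputable def assocS (u v w : G →₀ R) : G →₀ R := P.mul (P.mul u v) w - P.mul u (P.mul v w)

/-- The left nucleus `N_l(S)`. -/
def Nl : Set (G →₀ R) := {u | ∀ v w, P.assocS u v w = 0}

/-- The middle nucleus `N_m(S)`. -/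
def Nm : Set (G →₀ R) := {u | ∀ v w, P.assocS v u w = 0}

/-- The right nucleus `N_r(S)`. -/
def Nr : Set (G →₀ R) := {u | ∀ v w, P.assocS v w u = 0}

/-- The commuter `C(S)`. -/
def CS : Set (G →₀ R) := {u | ∀ v, P.mul u v = P.mul v u}

/-- The center `Z(S) = C(S) ∩ N_l(S) ∩ N_m(S) ∩ N_r(S)`. -/
def Z : Set (G →₀ R) := P.CS ∩ (P.Nl ∩ P.Nm ∩ P.Nr)

/-- `Z(S)^G = {s ∈ Z(S) : π̃^a_b(s) = δ_{a,b} s}`. -/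
def ZG : Set (G →₀ R) :=
  {s | s ∈ P.Z ∧ ∀ a b : G, P.ext a b s = if a = b then s else 0}

/-- `R` is `G`-simple: `{0}` and `R` are the only `G`-invariant ideals of `R`. -/
def RSimple : Prop :=
  ∀ J : Set R, IsIdealWith (· * ·) J → (∀ a b : G, ∀ r ∈ J, P.π a r b ∈ J) →
    J = {0} ∨ J = Set.univ

/-- `S` is `G`-simple: `{0}` and `S` are the only ideals of `S` invariant under all `π̃^a_b`. -/
def SSimple : Prop :=
  ∀ J : Set (G →₀ R), IsIdealWith P.mul J → (∀ a b : G, ∀ u ∈ J, P.ext a b u ∈ J) →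
    J = {0} ∨ J = Set.univ

end GDeriv


namespace GDeriv
variable {R : Type*} [NonAssocRing R] {G : Type*} [Monoid G] (P : GDeriv R G)

lemma pi_zero (a : G) : P.π a 0 = 0 := by
  have h := P.d3 a 0 0
  rw [add_zero] at h
  exact (left_eq_add.mp h)

lemma mul_single_one_right (u : G →₀ R) (a : G) :
    P.mul u (Finsupp.single a (1 : R)) = u.sum fun c r => Finsupp.single (c * a) r := by
  unfold GDeriv.mul
  refine Finsupp.sum_congr fun c _ => ?_
  rw [Finsupp.sum_single_index]
  · rw [P.d2, Finsupp.sum_single_index] <;> simp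
  · simp [P.pi_zero]

lemma mul_single_one_left (a : G) (w : G →₀ R) :
    P.mul (Finsupp.single a (1 : R)) w
      = w.sum fun b s => (P.π a s).sum fun c t => Finsupp.single (c * b) t := by
  unfold GDeriv.mul
  rw [Finsupp.sum_single_index]
  · simp
  · simp

lemma mem_Nr : Finsupp.single a (1 : R) ∈ P.Nr := by
  intro v w
  unfold GDeriv.assocS
  rw [sub_eq_zero, P.mul_single_one_right]
  conv_lhs => rw [GDeriv.mul,
    Finsupp.sum_sum_index (fun _ => Finsupp.single_zero _) (fun _ _ _ => Finsupp.single_add _ _ _)]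
  conv_rhs => rw [GDeriv.mul, P.mul_single_one_right]
  refine Finsupp.sum_congr fun b _ => ?_
  have hz : ∀ c' : G, ((P.π b (0 : R)).sum fun d t => Finsupp.single (d * c') (v b * t)) = 0 := by
    intro c'; simp [P.pi_zero]
  have ha : ∀ (c' : G) (s s' : R),
      ((P.π b (s + s')).sum fun d t => Finsupp.single (d * c') (v b * t))
        = ((P.π b s).sum fun d t => Finsupp.single (d * c') (v b * t))
          + (P.π b s').sum fun d t => Finsupp.single (d * c') (v b * t) := by
    intro c' s s'
    rw [P.d3, Finsupp.sum_add_index'] <;> simp [mul_add, Finsupp.single_add]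
  conv_lhs => rw [Finsupp.sum_sum_index (fun _ => Finsupp.single_zero _)
    (fun _ _ _ => Finsupp.single_add _ _ _)]
  conv_rhs => rw [Finsupp.sum_sum_index hz ha]
  refine Finsupp.sum_congr fun c _ => ?_
  conv_rhs => rw [Finsupp.sum_single_index (hz (c * a))]
  conv_lhs => rw [Finsupp.sum_sum_index (fun _ => Finsupp.single_zero _)
    (fun _ _ _ => Finsupp.single_add _ _ _)]
  refine Finsupp.sum_congr fun d _ => ?_
  rw [Finsupp.sum_single_index (by simp), mul_assoc]

lemma mem_Nm : Finsupp.single a (1 : R) ∈ P.Nm := by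
  intro v w
  unfold GDeriv.assocS
  rw [sub_eq_zero, P.mul_single_one_right]
  have hK0 : ∀ b' : G,
      (w.sum fun c s => (P.π b' s).sum fun d t => Finsupp.single (d * c) ((0 : R) * t)) = 0 := by
    intro b'; simp
  have hKa : ∀ (b' : G) (r r' : R),
      (w.sum fun c s => (P.π b' s).sum fun d t => Finsupp.single (d * c) ((r + r') * t))
        = (w.sum fun c s => (P.π b' s).sum fun d t => Finsupp.single (d * c) (r * t))
          + w.sum fun c s => (P.π b' s).sum fun d t => Finsupp.single (d * c) (r' * t) := by
    intro b' r r'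
    simp [add_mul, Finsupp.single_add, Finsupp.sum_add]
  conv_lhs => rw [GDeriv.mul, Finsupp.sum_sum_index hK0 hKa]
  conv_rhs => rw [GDeriv.mul]
  refine Finsupp.sum_congr fun b _ => ?_
  conv_lhs => rw [Finsupp.sum_single_index (hK0 (b * a))]
  have hz : ∀ c' : G, ((P.π b (0 : R)).sum fun d t => Finsupp.single (d * c') (v b * t)) = 0 := by
    intro c'; simp [P.pi_zero]
  have ha : ∀ (c' : G) (s s' : R),
      ((P.π b (s + s')).sum fun d t => Finsupp.single (d * c') (v b * t))
        = ((P.π b s).sum fun d t => Finsupp.single (d * c') (v b * t))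
          + (P.π b s').sum fun d t => Finsupp.single (d * c') (v b * t) := by
    intro c' s s'
    rw [P.d3, Finsupp.sum_add_index'] <;> simp [mul_add, Finsupp.single_add]
  conv_rhs => rw [P.mul_single_one_left, Finsupp.sum_sum_index hz ha]
  refine Finsupp.sum_congr fun c _ => ?_
  conv_rhs => rw [Finsupp.sum_sum_index hz ha]
  conv_lhs => rw [P.d4 b a (w c),
    Finsupp.sum_sum_index (fun e => by simp) (fun e u u' => by simp [mul_add, Finsupp.single_add])]
  refine Finsupp.sum_congr fun f _ => ?_
  conv_rhs => rw [Finsupp.sum_single_index (hz (f * c))]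
  conv_lhs => rw [Finsupp.sum_sum_index (fun e => by simp)
    (fun e u u' => by simp [mul_add, Finsupp.single_add])]
  refine Finsupp.sum_congr fun d _ => ?_
  rw [Finsupp.sum_single_index (by simp), mul_assoc]

end GDeriv

/-- For every `a ∈ G`, the element `xᵃ = 1·xᵃ` belongs to
`N_r(S) ∩ N_m(S)`. -/
theorem stmt1 {R : Type*} [NonAssocRing R] {G : Type*} [Monoid G]
    (P : GDeriv R G) (a : G) :
    Finsupp.single a (1 : R) ∈ P.Nr ∩ P.Nm := ⟨P.mem_Nr, P.mem_Nm⟩
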